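/- In a component-wise ordered similarity space, for any subsets A, B of W and any c ∈ V: if A ⊆ U_c(B), then ◇≤A ⊆ U_c(◇≤B); the same statement holds with ◇≥ in place of ◇≤. In particular, A ⊆ B implies ◇≤A ⊆ ◇≤B. -/

import Mathlib

/-- A finite t-norm: a finite subset `V` of the real unit interval containing `0` and `1`,
equipped with an associative, commutative, monotone operation with neutral element `1`. -/
structure FiniteTNorm where
  V : Set ℝ
  finite : V.Finite
  subset : V ⊆ Set.Icc (0 : ℝ) 1
  zero_mem : (0 : ℝ) ∈ V
  one_mem : (1 : ℝ) ∈ V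
  op : V → V → V
  op_assoc : ∀ a b c, op (op a b) c = op a (op b c)
  op_comm : ∀ a b, op a b = op b a
  op_one : ∀ a, op a ⟨1, one_mem⟩ = a
  op_mono : ∀ a b c d : V, (a : ℝ) ≤ (b : ℝ) → (c : ℝ) ≤ (d : ℝ) → (op a c : ℝ) ≤ (op b d : ℝ)

def FiniteTNorm.one (T : FiniteTNorm) : T.V := ⟨1, T.one_mem⟩

def FiniteTNorm.zero (T : FiniteTNorm) : T.V := ⟨0, T.zero_mem⟩

/-- A finite similarity space based on the finite t-norm `T`. -/
structure SimilaritySpace (T : FiniteTNorm) (W : Type) [Fintype W] [Nonempty W] where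
  S : W → W → T.V
  eq_one_iff : ∀ u v, S u v = T.one ↔ u = v
  symm : ∀ u v, S u v = S v u
  triangle : ∀ u v w, (T.op (S u v) (S v w) : ℝ) ≤ (S u w : ℝ)

/-- The `c`-neighbourhood `U_c(A)` of a set `A` of worlds. -/
def SimilaritySpace.nbhd {T : FiniteTNorm} {W : Type} [Fintype W] [Nonempty W]
    (sp : SimilaritySpace T W) (c : T.V) (A : Set W) : Set W :=
  {w | ∃ a ∈ A, (c : ℝ) ≤ (sp.S w a : ℝ)}

/-- A totally ordered similarity space: a finite similarity space together with a total
order compatible with the similarity. -/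
structure TOSimilaritySpace (T : FiniteTNorm) (W : Type) [Fintype W] [Nonempty W]
    [LinearOrder W] extends SimilaritySpace T W where
  compat : ∀ u v w : W, u ≤ v → v ≤ w → (S u w : ℝ) ≤ min (S u v : ℝ) (S v w : ℝ)

/-- The downward closure `◇≤ A`. -/
def dcl {W : Type} [LinearOrder W] (A : Set W) : Set W := {v | ∃ w ∈ A, v ≤ w}

/-- The upward closure `◇≥ A`. -/
def ucl {W : Type} [LinearOrder W] (A : Set W) : Set W := {v | ∃ w ∈ A, w ≤ v}

/-- The similarity on the product `W = ∏ i, W i` of totally ordered similarity spaces: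
`S(v,w) = min_i S_i(v_i, w_i)`. -/
noncomputable def prodS {T : FiniteTNorm} {M : ℕ} {W : Fin M → Type}
    [∀ i, Fintype (W i)] [∀ i, Nonempty (W i)] [∀ i, LinearOrder (W i)]
    (hM : 0 < M) (sps : ∀ i, TOSimilaritySpace T (W i))
    (v w : ∀ i, W i) : T.V :=
  haveI : Nonempty (Fin M) := ⟨⟨0, hM⟩⟩
  Finset.univ.inf' Finset.univ_nonempty fun i => (sps i).S (v i) (w i)

/-- The `c`-neighbourhood in a component-wise ordered similarity space. -/
def pNbhd {T : FiniteTNorm} {M : ℕ} {W : Fin M → Type}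
    [∀ i, Fintype (W i)] [∀ i, Nonempty (W i)] [∀ i, LinearOrder (W i)]
    (hM : 0 < M) (sps : ∀ i, TOSimilaritySpace T (W i))
    (c : T.V) (A : Set (∀ i, W i)) : Set (∀ i, W i) :=
  {w | ∃ a ∈ A, (c : ℝ) ≤ (prodS hM sps w a : ℝ)}

/-- `◇≤A` in a component-wise ordered similarity space. -/
def pDcl {M : ℕ} {W : Fin M → Type} [∀ i, LinearOrder (W i)]
    (A : Set (∀ i, W i)) : Set (∀ i, W i) :=
  {w | ∀ i, ∃ v ∈ A, w i ≤ v i}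

/-- `◇≥A` in a component-wise ordered similarity space. -/
def pUcl {M : ℕ} {W : Fin M → Type} [∀ i, LinearOrder (W i)]
    (A : Set (∀ i, W i)) : Set (∀ i, W i) :=
  {w | ∀ i, ∃ v ∈ A, v i ≤ w i}

/-- The cylindrical extension `πC` of a subset `C` of the `i`-th component. -/
def cyl {M : ℕ} {W : Fin M → Type} (i : Fin M) (C : Set (W i)) : Set (∀ j, W j) :=
  {w | w i ∈ C}

/-- The cylindrical extension `πA` of a subset `A` of the partial product over the
block of coordinates `I`. -/
def cylOn {M : ℕ} {W : Fin M → Type} (I : Finset (Fin M))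
    (A : Set (∀ i : {x // x ∈ I}, W i.1)) : Set (∀ i, W i) :=
  {w | (fun i : {x // x ∈ I} => w i.1) ∈ A}


/-! In one coordinate: if `w ≤ v` then `S(w, min w b) ≥ S(v, b)`, since either `min w b = w`
or `b ≤ w ≤ v`, where compatibility of the order gives `S(b, w) ≥ S(b, v)`. Given `w ∈ ◇≤A`
and `A ⊆ U_c(B)`, choose for each coordinate `i` some `vᵢ ∈ A` with `w i ≤ vᵢ i` and some
`bᵢ ∈ B` that is `c`-close to `vᵢ`; then `w` is `c`-close to `i ↦ min (w i) (bᵢ i) ∈ ◇≤B`.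
Dually with `max` for `◇≥`. -/

namespace SimilaritySpace

variable {T : FiniteTNorm} {W : Type} [Fintype W] [Nonempty W] (sp : SimilaritySpace T W)

theorem S_le_one (u v : W) : (sp.S u v : ℝ) ≤ 1 :=
  (T.subset (sp.S u v).2).2

theorem S_self (u : W) : (sp.S u u : ℝ) = 1 := by
  rw [(sp.eq_one_iff u u).mpr rfl]
  rfl

end SimilaritySpace

namespace TOSimilaritySpace

variable {T : FiniteTNorm} {W : Type} [Fintype W] [Nonempty W] [LinearOrder W]
  (sp : TOSimilaritySpace T W)

theorem S_le_S_min {v w : W} (hwv : w ≤ v) (b : W) :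
    (sp.S v b : ℝ) ≤ sp.S w (min w b) := by
  rcases le_total w b with hwb | hbw
  · rw [min_eq_left hwb, sp.S_self]
    exact sp.S_le_one v b
  · rw [min_eq_right hbw, sp.symm v b, sp.symm w b]
    exact (sp.compat b w v hbw hwv).trans (min_le_left _ _)

theorem S_le_S_max {v w : W} (hvw : v ≤ w) (b : W) :
    (sp.S v b : ℝ) ≤ sp.S w (max w b) := by
  rcases le_total b w with hbw | hwb
  · rw [max_eq_left hbw, sp.S_self]
    exact sp.S_le_one v b
  · rw [max_eq_right hwb]
    exact (sp.compat v w b hvw hwb).trans (min_le_right _ _)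

end TOSimilaritySpace

theorem pDcl_mono {M : ℕ} {W : Fin M → Type} [∀ i, LinearOrder (W i)]
    {A B : Set (∀ i, W i)} (h : A ⊆ B) : pDcl A ⊆ pDcl B :=
  fun _ hw i => let ⟨v, hv, hle⟩ := hw i; ⟨v, h hv, hle⟩

theorem pUcl_mono {M : ℕ} {W : Fin M → Type} [∀ i, LinearOrder (W i)]
    {A B : Set (∀ i, W i)} (h : A ⊆ B) : pUcl A ⊆ pUcl B :=
  fun _ hw i => let ⟨v, hv, hle⟩ := hw i; ⟨v, h hv, hle⟩

section Product

variable {T : FiniteTNorm} {M : ℕ} {W : Fin M → Type}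
  [∀ i, Fintype (W i)] [∀ i, Nonempty (W i)] [∀ i, LinearOrder (W i)]
  (hM : 0 < M) (sps : ∀ i, TOSimilaritySpace T (W i))

theorem le_prodS_iff {c : T.V} {v w : ∀ i, W i} :
    (c : ℝ) ≤ prodS hM sps v w ↔ ∀ i, (c : ℝ) ≤ (sps i).S (v i) (w i) := by
  simp only [Subtype.coe_le_coe, prodS, Finset.le_inf'_iff, Finset.mem_univ, true_implies]

theorem pDcl_subset_pNbhd_pDcl {A B : Set (∀ i, W i)} {c : T.V}
    (hAB : A ⊆ pNbhd hM sps c B) : pDcl A ⊆ pNbhd hM sps c (pDcl B) := by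
  intro w hw
  choose v hvA hwv using hw
  choose b hbB hvb using fun i => hAB (hvA i)
  refine ⟨fun i => min (w i) (b i i), fun i => ⟨b i, hbB i, min_le_right _ _⟩, ?_⟩
  rw [le_prodS_iff]
  intro i
  calc (c : ℝ) ≤ (sps i).S (v i i) (b i i) := (le_prodS_iff hM sps).mp (hvb i) i
    _ ≤ (sps i).S (w i) (min (w i) (b i i)) := (sps i).S_le_S_min (hwv i) _

theorem pUcl_subset_pNbhd_pUcl {A B : Set (∀ i, W i)} {c : T.V}
    (hAB : A ⊆ pNbhd hM sps c B) : pUcl A ⊆ pNbhd hM sps c (pUcl B) := by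
  intro w hw
  choose v hvA hvw using hw
  choose b hbB hvb using fun i => hAB (hvA i)
  refine ⟨fun i => max (w i) (b i i), fun i => ⟨b i, hbB i, le_max_right _ _⟩, ?_⟩
  rw [le_prodS_iff]
  intro i
  calc (c : ℝ) ≤ (sps i).S (v i i) (b i i) := (le_prodS_iff hM sps).mp (hvb i) i
    _ ≤ (sps i).S (w i) (max (w i) (b i i)) := (sps i).S_le_S_max (hvw i) _

end Product

/-- In a component-wise ordered similarity space, if `A ⊆ U_c(B)` then
`◇≤A ⊆ U_c(◇≤B)`, and likewise for `◇≥`; in particular `A ⊆ B` implies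
`◇≤A ⊆ ◇≤B` (and `◇≥A ⊆ ◇≥B`). -/
theorem pdiamond_nbhd_mono {T : FiniteTNorm} {M : ℕ} {W : Fin M → Type}
    [∀ i, Fintype (W i)] [∀ i, Nonempty (W i)] [∀ i, LinearOrder (W i)]
    (hM : 0 < M) (sps : ∀ i, TOSimilaritySpace T (W i))
    (A B : Set (∀ i, W i)) (c : T.V) :
    (A ⊆ pNbhd hM sps c B → pDcl A ⊆ pNbhd hM sps c (pDcl B)) ∧
    (A ⊆ pNbhd hM sps c B → pUcl A ⊆ pNbhd hM sps c (pUcl B)) ∧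
    (A ⊆ B → pDcl A ⊆ pDcl B) ∧ (A ⊆ B → pUcl A ⊆ pUcl B) :=
  ⟨pDcl_subset_pNbhd_pDcl hM sps, pUcl_subset_pNbhd_pUcl hM sps, pDcl_mono, pUcl_mono⟩
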